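/- Let t be the multiplicative order of q^4 in K^*. For every (α,β) ∈ (K^*)^2, the formulas v_k·e1 = α^2 ((q^{4k}-1)/(1-q^4)) v_{k-1} for 1 ≤ k ≤ t-1 and v_0·e1 = 0, v_k·e3 = q^{2k} α v_k, v_k·z = β v_k, v_k·w = v_{k+1} for 0 ≤ k ≤ t-2 and v_{t-1}·w = 0, define a right B-module structure on the K-vector space with basis v_0,…,v_{t-1}, and the resulting module V3(α,β) is a simple B-module of K-dimension t. -/
import Mathlib


noncomputable section

open MulOpposite

/-- The defining relations of the "good" subalgebra `B` of `U_q^+(B_2)`, on the free algebra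
on generators `e1 = ι 0`, `e3 = ι 1`, `z = ι 2`, `w = ι 3`
(where `w = e2·e3 + z/(q^2-1)` inside `U_q^+(B_2)`). -/
inductive BqRel (K : Type*) [Field K] (q : K) :
    FreeAlgebra K (Fin 4) → FreeAlgebra K (Fin 4) → Prop
  | e1e3 : BqRel K q (FreeAlgebra.ι K 0 * FreeAlgebra.ι K 1)
      (q⁻¹ ^ 2 • (FreeAlgebra.ι K 1 * FreeAlgebra.ι K 0))
  | e1z : BqRel K q (FreeAlgebra.ι K 0 * FreeAlgebra.ι K 2)
      (FreeAlgebra.ι K 2 * FreeAlgebra.ι K 0)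
  | e3z : BqRel K q (FreeAlgebra.ι K 1 * FreeAlgebra.ι K 2)
      (FreeAlgebra.ι K 2 * FreeAlgebra.ι K 1)
  | wz : BqRel K q (FreeAlgebra.ι K 3 * FreeAlgebra.ι K 2)
      (FreeAlgebra.ι K 2 * FreeAlgebra.ι K 3)
  | we3 : BqRel K q (FreeAlgebra.ι K 3 * FreeAlgebra.ι K 1)
      (q ^ 2 • (FreeAlgebra.ι K 1 * FreeAlgebra.ι K 3))
  | we1 : BqRel K q (FreeAlgebra.ι K 3 * FreeAlgebra.ι K 0)
      (FreeAlgebra.ι K 0 * FreeAlgebra.ι K 3 - FreeAlgebra.ι K 1 ^ 2)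

/-- The algebra `B`, presented by generators `e1, e3, z, w` and the relations above. -/
abbrev Bq (K : Type*) [Field K] (q : K) : Type _ := RingQuot (BqRel K q)

variable (K : Type*) [Field K] (q : K)

/-- The generator `e1` of `B`. -/
def Be1 : Bq K q := RingQuot.mkAlgHom K (BqRel K q) (FreeAlgebra.ι K 0)
/-- The generator `e3` of `B`. -/
def Be3 : Bq K q := RingQuot.mkAlgHom K (BqRel K q) (FreeAlgebra.ι K 1)
/-- The generator `z` of `B`. -/
def Bz : Bq K q := RingQuot.mkAlgHom K (BqRel K q) (FreeAlgebra.ι K 2)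
/-- The generator `w` of `B`. -/
def Bw : Bq K q := RingQuot.mkAlgHom K (BqRel K q) (FreeAlgebra.ι K 3)

namespace Stmt11Aux

variable {K : Type*} [Field K]
variable {K : Type*} [Field K]
def cc (q α : K) (k : ℕ) : K := α ^ 2 * ((q ^ (4 * k) - 1) / (1 - q ^ 4))
variable (q α β : K) (t : ℕ)
def opE1 : Module.End K (Fin t → K) where
  toFun f i := if h : (i : ℕ) + 1 < t then cc q α ((i:ℕ)+1) * f ⟨(i:ℕ)+1, h⟩ else 0
  map_add' f g := by
    funext i; by_cases h : (i:ℕ)+1 < t <;> simp [h, mul_add]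
  map_smul' a f := by
    funext i; by_cases h : (i:ℕ)+1 < t <;> simp [h, smul_eq_mul] <;> ring
def opE3 : Module.End K (Fin t → K) where
  toFun f i := q ^ (2 * (i:ℕ)) * α * f i
  map_add' f g := by funext i; simp only [Pi.add_apply]; ring
  map_smul' a f := by
    funext i; simp only [Pi.smul_apply, smul_eq_mul, RingHom.id_apply]; ring
def opZ : Module.End K (Fin t → K) where
  toFun f i := β * f i
  map_add' f g := by funext i; simp only [Pi.add_apply]; ring
  map_smul' a f := by
    funext i; simp only [Pi.smul_apply, smul_eq_mul, RingHom.id_apply]; ring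
def opW : Module.End K (Fin t → K) where
  toFun f i := if h : 0 < (i : ℕ) then f ⟨(i:ℕ)-1, Nat.lt_of_le_of_lt (Nat.sub_le _ _) i.isLt⟩ else 0
  map_add' f g := by funext i; by_cases h : 0 < (i:ℕ) <;> simp [h]
  map_smul' a f := by funext i; by_cases h : 0 < (i:ℕ) <;> simp [h]

lemma opE1_apply (f : Fin t → K) (i : Fin t) :
    opE1 q α t f i = if h : (i : ℕ) + 1 < t then cc q α ((i:ℕ)+1) * f ⟨(i:ℕ)+1, h⟩ else 0 := rfl
lemma opE3_apply (f : Fin t → K) (i : Fin t) : opE3 q α t f i = q ^ (2 * (i:ℕ)) * α * f i := rfl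
lemma opZ_apply (f : Fin t → K) (i : Fin t) : opZ β t f i = β * f i := rfl
lemma opW_apply (f : Fin t → K) (i : Fin t) :
    opW t f i = if h : 0 < (i : ℕ) then
      f ⟨(i:ℕ)-1, Nat.lt_of_le_of_lt (Nat.sub_le _ _) i.isLt⟩ else 0 := rfl

lemma rel1 (hq0 : q ≠ 0) :
    opE3 q α t * opE1 q α t = q⁻¹ ^ 2 • (opE1 q α t * opE3 q α t) := by
  refine LinearMap.ext fun f => funext fun i => ?_
  simp only [Module.End.mul_apply, LinearMap.smul_apply, Pi.smul_apply, smul_eq_mul,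
    opE1_apply, opE3_apply]
  by_cases h : (i:ℕ)+1 < t <;> simp only [h, dif_pos, dif_neg, not_false_iff, mul_zero]
  rw [show 2*((i:ℕ)+1) = 2*(i:ℕ)+2 by ring, pow_add]
  field_simp

lemma rel2 : opZ β t * opE1 q α t = opE1 q α t * opZ β t := by
  refine LinearMap.ext fun f => funext fun i => ?_
  simp only [Module.End.mul_apply, opE1_apply, opZ_apply]
  by_cases h : (i:ℕ)+1 < t <;> simp [h] <;> ring

lemma rel3 : opZ β t * opE3 q α t = opE3 q α t * opZ β t := by
  refine LinearMap.ext fun f => funext fun i => ?_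
  simp only [Module.End.mul_apply, opE3_apply, opZ_apply]; ring

lemma rel4 : opZ β t * opW t = opW t * opZ β t := by
  refine LinearMap.ext fun f => funext fun i => ?_
  simp only [Module.End.mul_apply, opW_apply, opZ_apply]
  by_cases h : 0 < (i:ℕ) <;> simp [h]

lemma rel5 : opE3 q α t * opW t = q ^ 2 • (opW t * opE3 q α t) := by
  refine LinearMap.ext fun f => funext fun i => ?_
  simp only [Module.End.mul_apply, LinearMap.smul_apply, Pi.smul_apply, smul_eq_mul,
    opE3_apply, opW_apply]
  by_cases h : 0 < (i:ℕ) <;> simp only [h, dif_pos, dif_neg, not_false_iff, mul_zero]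
  · rw [show 2*(i:ℕ) = 2*((i:ℕ)-1)+2 by omega, pow_add]
    ring

lemma rel6 (hct : cc q α t = 0) (hkey : ∀ k : ℕ, cc q α (k+1) = cc q α k - q ^ (4*k) * α ^ 2)
    (ht2 : 2 ≤ t) :
    opE1 q α t * opW t = opW t * opE1 q α t - opE3 q α t ^ 2 := by
  have hc0 : cc q α 0 = 0 := by simp [cc]
  refine LinearMap.ext fun f => funext fun i => ?_
  simp only [LinearMap.sub_apply, Pi.sub_apply, Module.End.mul_apply, Module.End.pow_apply,
    Function.iterate_succ, Function.iterate_zero, Function.comp_apply, id_eq,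
    opE1_apply, opE3_apply, opW_apply]
  have hq4i : q ^ (4*(i:ℕ)) = q ^ (2*(i:ℕ)) * q ^ (2*(i:ℕ)) := by rw [← pow_add]; congr 1; ring
  by_cases h1 : (i:ℕ)+1 < t <;> by_cases h2 : 0 < (i:ℕ) <;>
    simp only [h1, h2, dif_pos, dif_neg, not_false_iff, mul_zero, Nat.add_sub_cancel,
      Nat.lt_irrefl, Fin.eta]
  · -- i+1<t, 0<i
    have h3 : ((i:ℕ)-1)+1 < t := by omega
    simp only [h3, dif_pos]
    have h4 : ((i:ℕ)-1)+1 = (i:ℕ) := by omega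
    have h5 : (⟨((i:ℕ)-1)+1, h3⟩ : Fin t) = i := by ext; simp [h4]
    rw [h5]
    have := hkey (i:ℕ)
    rw [hq4i] at this
    rw [h4]
    rw [dif_pos (Nat.succ_pos (i:ℕ)), this]
    ring
  · have hi : (i:ℕ) = 0 := by omega
    have h0 : cc q α (i:ℕ) = 0 := by rw [hi]; exact hc0
    have hk := hkey (i:ℕ); rw [hq4i, h0] at hk
    rw [dif_pos (Nat.succ_pos (i:ℕ)), hk]; ring
  · have h3 : ((i:ℕ)-1)+1 < t := by omega
    rw [dif_pos h3]
    have h4 : ((i:ℕ)-1)+1 = (i:ℕ) := by omega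
    have h5 : (⟨((i:ℕ)-1)+1, h3⟩ : Fin t) = i := by ext; simp [h4]
    rw [h5]
    have hit : (i:ℕ)+1 = t := by omega
    have hk := hkey (i:ℕ); rw [hq4i, hit, hct] at hk
    rw [h4]
    linear_combination f i * hk
  · omega

variable (q α β : K) (t : ℕ) in
def ρfree : FreeAlgebra K (Fin 4) →ₐ[K] (Module.End K (Fin t → K))ᵐᵒᵖ :=
  FreeAlgebra.lift K ![op (opE1 q α t), op (opE3 q α t), op (opZ β t), op (opW t)]

variable (q α β : K) (t : ℕ) in
lemma ρfree_rel (hq0 : q ≠ 0) (hct : cc q α t = 0)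
    (hkey : ∀ k : ℕ, cc q α (k+1) = cc q α k - q ^ (4*k) * α ^ 2) (ht2 : 2 ≤ t) :
    ∀ ⦃x y : FreeAlgebra K (Fin 4)⦄, BqRel K q x y → ρfree q α β t x = ρfree q α β t y := by
  intro x y h
  induction h <;>
    simp only [ρfree, map_mul, map_smul, FreeAlgebra.lift_ι_apply, Matrix.cons_val_zero,
      Matrix.cons_val_one, Matrix.head_cons, Matrix.cons_val_two, Matrix.tail_cons,
      Matrix.cons_val_three, map_sub, map_pow]
  · rw [← op_mul, ← op_mul, ← op_smul, rel1 q α t hq0]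
  · rw [← op_mul, ← op_mul, rel2 q α β t]
  · rw [← op_mul, ← op_mul, rel3 q α β t]
  · rw [← op_mul, ← op_mul, rel4 β t]
  · rw [← op_mul, ← op_mul, ← op_smul, rel5 q α t]
  · rw [← op_mul, ← op_mul, ← op_pow, ← op_sub, rel6 q α t hct hkey ht2]

variable (q α β : K) (t : ℕ) in
lemma opE3_eq (v : Fin t → K) : opE3 q α t v = fun i : Fin t => q ^ (2 * (i:ℕ)) * α * v i := rfl

variable (q α : K) in
lemma opE1_single (t : ℕ) (k : Fin t) (hk : 0 < (k:ℕ)) (hd : ((k:ℕ)-1) < t) :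
    opE1 q α t (Pi.single k 1) = cc q α k • (Pi.single (⟨(k:ℕ)-1, hd⟩ : Fin t) 1 : Fin t → K) := by
  funext i
  have hkt := k.isLt
  have hit := i.isLt
  rw [opE1_apply]
  simp only [Pi.smul_apply, smul_eq_mul, Pi.single_apply]
  by_cases h : (i:ℕ)+1 < t
  · rw [dif_pos h]
    by_cases he : (i:ℕ)+1 = (k:ℕ)
    · have h1 : (⟨(i:ℕ)+1, h⟩ : Fin t) = k := Fin.ext he
      have h2 : i = (⟨(k:ℕ)-1, hd⟩ : Fin t) := Fin.ext (by simp; omega)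
      rw [if_pos h1, if_pos h2, he]
    · have h1 : (⟨(i:ℕ)+1, h⟩ : Fin t) ≠ k := fun hh => he (by simpa [Fin.ext_iff] using hh)
      have h2 : i ≠ (⟨(k:ℕ)-1, hd⟩ : Fin t) := by
        intro hh; simp [Fin.ext_iff] at hh; omega
      rw [if_neg h1, if_neg h2, mul_zero, mul_zero]
  · rw [dif_neg h]
    have h2 : i ≠ (⟨(k:ℕ)-1, hd⟩ : Fin t) := by
      intro hh; simp [Fin.ext_iff] at hh; omega
    rw [if_neg h2, mul_zero]

variable (q α : K) in
lemma opE1_single_zero (t : ℕ) (k : Fin t) (hk : (k:ℕ) = 0) :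
    opE1 q α t (Pi.single k 1) = 0 := by
  funext i
  rw [opE1_apply]
  by_cases h : (i:ℕ)+1 < t
  · rw [dif_pos h]
    have h1 : (⟨(i:ℕ)+1, h⟩ : Fin t) ≠ k := by
      intro hh; simp [Fin.ext_iff, hk] at hh
    simp [Pi.single_apply, h1]
  · rw [dif_neg h]; rfl

variable (q α : K) in
lemma opE3_single (t : ℕ) (k : Fin t) :
    opE3 q α t (Pi.single k 1) = (q ^ (2*(k:ℕ)) * α) • (Pi.single k 1 : Fin t → K) := by
  funext i
  rw [opE3_apply]
  simp only [Pi.smul_apply, smul_eq_mul, Pi.single_apply]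
  by_cases h : i = k
  · subst h; simp
  · simp [h]

variable (β : K) in
lemma opZ_eq (t : ℕ) (v : Fin t → K) : opZ β t v = β • v := by
  funext i; simp [opZ_apply]

lemma opW_single (t : ℕ) (k : Fin t) (h : (k:ℕ)+1 < t) :
    opW (K := K) t (Pi.single k 1) = (Pi.single (⟨(k:ℕ)+1, h⟩ : Fin t) 1 : Fin t → K) := by
  funext i
  have hkt := k.isLt
  have hit := i.isLt
  rw [opW_apply]
  simp only [Pi.single_apply]
  by_cases h0 : 0 < (i:ℕ)
  · rw [dif_pos h0]
    by_cases he : (i:ℕ)-1 = (k:ℕ)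
    · have h1 : (⟨(i:ℕ)-1, Nat.lt_of_le_of_lt (Nat.sub_le _ _) i.isLt⟩ : Fin t) = k := Fin.ext he
      have h2 : i = (⟨(k:ℕ)+1, h⟩ : Fin t) := Fin.ext (by simp; omega)
      rw [if_pos h1, if_pos h2]
    · have h1 : (⟨(i:ℕ)-1, Nat.lt_of_le_of_lt (Nat.sub_le _ _) i.isLt⟩ : Fin t) ≠ k :=
        fun hh => he (by simpa [Fin.ext_iff] using hh)
      have h2 : i ≠ (⟨(k:ℕ)+1, h⟩ : Fin t) := by
        intro hh; simp [Fin.ext_iff] at hh; omega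
      rw [if_neg h1, if_neg h2]
  · rw [dif_neg h0]
    have h2 : i ≠ (⟨(k:ℕ)+1, h⟩ : Fin t) := by
      intro hh; simp [Fin.ext_iff] at hh; omega
    rw [if_neg h2]

lemma opW_single_top (t : ℕ) (k : Fin t) (h : (k:ℕ)+1 = t) :
    opW (K := K) t (Pi.single k 1) = (0 : Fin t → K) := by
  funext i
  have hkt := k.isLt
  have hit := i.isLt
  rw [opW_apply]
  by_cases h0 : 0 < (i:ℕ)
  · rw [dif_pos h0]
    have h1 : (⟨(i:ℕ)-1, Nat.lt_of_le_of_lt (Nat.sub_le _ _) i.isLt⟩ : Fin t) ≠ k := by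
      intro hh; simp [Fin.ext_iff] at hh; omega
    simp [Pi.single_apply, h1]
  · rw [dif_neg h0]; rfl

open scoped Classical in
lemma exists_single (t : ℕ) (lam : Fin t → K) (hlam : ∀ i j, lam i = lam j → i = j)
    (W : Submodule K (Fin t → K)) (hW : ∀ v ∈ W, (fun i => lam i * v i) ∈ W) :
    ∀ n : ℕ, ∀ v ∈ W, v ≠ 0 → (Finset.univ.filter (fun i => v i ≠ 0)).card ≤ n →
      ∃ k : Fin t, Pi.single k (1:K) ∈ W := by
  classical
  intro n
  induction n with
  | zero =>
    intro v hv hv0 hcard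
    exfalso
    obtain ⟨k, hk⟩ := Function.ne_iff.1 hv0
    simp only [Pi.zero_apply] at hk
    have hmem : k ∈ Finset.univ.filter (fun i => v i ≠ 0) := by simp [hk]
    have := Finset.card_pos.2 ⟨k, hmem⟩
    omega
  | succ n ih =>
    intro v hv hv0 hcard
    obtain ⟨k, hk⟩ := Function.ne_iff.1 hv0
    simp only [Pi.zero_apply] at hk
    by_cases hone : ∀ j, v j ≠ 0 → j = k
    · refine ⟨k, ?_⟩
      have hvk : v = v k • (Pi.single k 1 : Fin t → K) := by
        funext j
        by_cases hj : j = k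
        · subst hj; simp
        · have hvj : v j = 0 := by by_contra hh; exact hj (hone j hh)
          simp [Pi.single_apply, hj, hvj]
      have heq : Pi.single k (1:K) = (v k)⁻¹ • v := by
        nth_rewrite 2 [hvk]
        rw [smul_smul, inv_mul_cancel₀ hk, one_smul]
      rw [heq]; exact W.smul_mem _ hv
    · push_neg at hone
      obtain ⟨j, hj0, hjk⟩ := hone
      set v' : Fin t → K := fun i => (lam i - lam j) * v i with hv'
      have hv'W : v' ∈ W := by
        have heq : v' = (fun i => lam i * v i) - lam j • v := by
          funext i
          simp only [hv', Pi.sub_apply, Pi.smul_apply, smul_eq_mul]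
          ring
        rw [heq]; exact Submodule.sub_mem W (hW v hv) (W.smul_mem _ hv)
      have hv'k : v' k ≠ 0 := by
        simp only [hv']
        exact mul_ne_zero (sub_ne_zero.2 fun h => hjk (hlam k j h).symm) hk
      have hv'0 : v' ≠ 0 := fun h => hv'k (by rw [h]; rfl)
      refine ih v' hv'W hv'0 ?_
      have hsub : Finset.univ.filter (fun i => v' i ≠ 0) ⊆
          (Finset.univ.filter (fun i => v i ≠ 0)).erase j := by
        intro i hi
        simp only [Finset.mem_filter, Finset.mem_univ, true_and, hv'] at hi
        refine Finset.mem_erase.2 ⟨?_, ?_⟩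
        · rintro rfl; exact hi (by simp)
        · simp only [Finset.mem_filter, Finset.mem_univ, true_and]
          intro h; exact hi (by rw [h, mul_zero])
      have hj_mem : j ∈ Finset.univ.filter (fun i => v i ≠ 0) := by simp [hj0]
      have hcard2 := Finset.card_le_card hsub
      rw [Finset.card_erase_of_mem hj_mem] at hcard2
      omega

end Stmt11Aux

/-- Let `t` be the multiplicative order of `q^4`. For `(α,β) ∈ (K^*)^2`,
the formulas `v_k·e1 = α^2 ((q^{4k}-1)/(1-q^4)) v_{k-1}` (for `k ≥ 1`), `v_0·e1 = 0`,
`v_k·e3 = q^{2k} α v_k`, `v_k·z = β v_k`, `v_k·w = v_{k+1}` (for `k ≤ t-2`),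
`v_{t-1}·w = 0` define a right `B`-module structure on the `K`-vector space with basis
`v_0, …, v_{t-1}`, and the resulting module `V3(α,β)` is simple of `K`-dimension `t`. -/
theorem stmt11 (m : ℕ) (hm : 5 ≤ m) (hq : IsPrimitiveRoot q m)
    (l : ℕ) (hl : l = if Odd m then m else m / 2)
    (t : ℕ) (ht : t = orderOf (q ^ 4))
    (α β : K) (hα : α ≠ 0) (hβ : β ≠ 0) :
    ∃ ρ : Bq K q →ₐ[K] (Module.End K (Fin t → K))ᵐᵒᵖ,
      (∀ k : Fin t, ∀ hk : 0 < (k : ℕ), (ρ (Be1 K q)).unop (Pi.single k 1) =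
        (α ^ 2 * ((q ^ (4 * (k : ℕ)) - 1) / (1 - q ^ 4))) •
          (Pi.single (⟨(k : ℕ) - 1, Nat.lt_of_le_of_lt (Nat.sub_le _ _) k.isLt⟩ : Fin t) 1 :
            Fin t → K)) ∧
      (∀ k : Fin t, (k : ℕ) = 0 → (ρ (Be1 K q)).unop (Pi.single k 1) = 0) ∧
      (∀ k : Fin t, (ρ (Be3 K q)).unop (Pi.single k 1) =
        (q ^ (2 * (k : ℕ)) * α) • (Pi.single k 1 : Fin t → K)) ∧
      (∀ k : Fin t, (ρ (Bz K q)).unop (Pi.single k 1) =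
        β • (Pi.single k 1 : Fin t → K)) ∧
      (∀ k : Fin t, ∀ hk : (k : ℕ) + 1 < t, (ρ (Bw K q)).unop (Pi.single k 1) =
        (Pi.single (⟨(k : ℕ) + 1, hk⟩ : Fin t) 1 : Fin t → K)) ∧
      (∀ k : Fin t, (k : ℕ) + 1 = t → (ρ (Bw K q)).unop (Pi.single k 1) = 0) ∧
      Nontrivial (Fin t → K) ∧
      (∀ W : Submodule K (Fin t → K),
        (∀ b : Bq K q, ∀ v ∈ W, (ρ b).unop v ∈ W) → W = ⊥ ∨ W = ⊤) ∧
      Module.finrank K (Fin t → K) = t := by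
  classical
  have hq0 : q ≠ 0 := hq.ne_zero (by omega)
  have h41 : q ^ 4 ≠ 1 := by
    intro h
    have hd := (hq.pow_eq_one_iff_dvd 4).1 h
    have := Nat.le_of_dvd (by norm_num) hd
    omega
  have h1q4 : 1 - q ^ 4 ≠ 0 := sub_ne_zero.2 (Ne.symm h41)
  have hfin : IsOfFinOrder (q ^ 4) := by
    refine isOfFinOrder_iff_pow_eq_one.2 ⟨m, by omega, ?_⟩
    rw [← pow_mul, mul_comm, pow_mul, hq.pow_eq_one, one_pow]
  have ht0 : 0 < t := ht ▸ hfin.orderOf_pos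
  have ht1 : t ≠ 1 := by
    intro h
    apply h41
    have h2 : (q ^ 4) ^ t = 1 := ht ▸ pow_orderOf_eq_one _
    rw [h] at h2
    simpa using h2
  have ht2 : 2 ≤ t := by omega
  have hqt : (q ^ 4) ^ t = 1 := ht ▸ pow_orderOf_eq_one _
  have hct : Stmt11Aux.cc q α t = 0 := by
    simp [Stmt11Aux.cc, pow_mul, hqt]
  have hkey : ∀ k : ℕ, Stmt11Aux.cc q α (k+1) = Stmt11Aux.cc q α k - q ^ (4*k) * α ^ 2 := by
    intro k
    simp only [Stmt11Aux.cc]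
    field_simp
    ring
  have hpne : ∀ k : ℕ, 0 < k → k < t → q ^ (4*k) ≠ 1 := by
    intro k hk0 hkt h
    have hd : orderOf (q ^ 4) ∣ k := orderOf_dvd_of_pow_eq_one (by rw [← pow_mul]; exact h)
    rw [← ht] at hd
    exact absurd (Nat.le_of_dvd hk0 hd) (by omega)
  have hcne : ∀ k : ℕ, 0 < k → k < t → Stmt11Aux.cc q α k ≠ 0 := fun k hk0 hkt =>
    mul_ne_zero (pow_ne_zero _ hα) (div_ne_zero (sub_ne_zero.2 (hpne k hk0 hkt)) h1q4)
  have hlamkey : ∀ i j : ℕ, i ≤ j → j < t → q ^ (2*i) = q ^ (2*j) → i = j := by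
    intro i j hle hlt hpow
    by_contra hne
    have hd0 : 0 < j - i := by omega
    have hsplit : q ^ (2*j) = q ^ (2*i) * q ^ (2*(j-i)) := by
      rw [← pow_add]; congr 1; omega
    have h1 : q ^ (2*(j-i)) = 1 := by
      have h2 : q ^ (2*i) * q ^ (2*(j-i)) = q ^ (2*i) * 1 := by
        rw [mul_one, ← hsplit, hpow]
      exact mul_left_cancel₀ (pow_ne_zero _ hq0) h2
    have h4 : (q ^ 4) ^ (j-i) = 1 := by
      rw [← pow_mul, show 4*(j-i) = 2*(j-i)*2 by ring, pow_mul, h1, one_pow]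
    have hd := orderOf_dvd_of_pow_eq_one h4
    rw [← ht] at hd
    have := Nat.le_of_dvd hd0 hd
    omega
  have hlam : ∀ i j : Fin t, q ^ (2*(i:ℕ)) * α = q ^ (2*(j:ℕ)) * α → i = j := by
    intro i j hij
    have h2 : q ^ (2*(i:ℕ)) = q ^ (2*(j:ℕ)) := mul_right_cancel₀ hα hij
    rcases le_total (i:ℕ) (j:ℕ) with h | h
    · exact Fin.ext (hlamkey _ _ h j.isLt h2)
    · exact Fin.ext (hlamkey _ _ h i.isLt h2.symm).symm
  refine ⟨RingQuot.liftAlgHom K ⟨Stmt11Aux.ρfree q α β t,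
    Stmt11Aux.ρfree_rel q α β t hq0 hct hkey ht2⟩, ?_⟩
  set ρ := RingQuot.liftAlgHom K ⟨Stmt11Aux.ρfree q α β t,
    Stmt11Aux.ρfree_rel q α β t hq0 hct hkey ht2⟩ with hρ
  have hρ1 : ρ (Be1 K q) = op (Stmt11Aux.opE1 q α t) := by
    rw [hρ, Be1, RingQuot.liftAlgHom_mkAlgHom_apply]
    simp [Stmt11Aux.ρfree]
  have hρ3 : ρ (Be3 K q) = op (Stmt11Aux.opE3 q α t) := by
    rw [hρ, Be3, RingQuot.liftAlgHom_mkAlgHom_apply]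
    simp [Stmt11Aux.ρfree]
  have hρz : ρ (Bz K q) = op (Stmt11Aux.opZ β t) := by
    rw [hρ, Bz, RingQuot.liftAlgHom_mkAlgHom_apply]
    simp [Stmt11Aux.ρfree]
  have hρw : ρ (Bw K q) = op (Stmt11Aux.opW t) := by
    rw [hρ, Bw, RingQuot.liftAlgHom_mkAlgHom_apply]
    simp [Stmt11Aux.ρfree]
  refine ⟨?_, ?_, ?_, ?_, ?_, ?_, ?_, ?_, ?_⟩
  · intro k hk
    rw [hρ1, unop_op, Stmt11Aux.opE1_single q α t k hk
      (Nat.lt_of_le_of_lt (Nat.sub_le _ _) k.isLt)]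
    rfl
  · intro k hk
    rw [hρ1, unop_op, Stmt11Aux.opE1_single_zero q α t k hk]
  · intro k
    rw [hρ3, unop_op, Stmt11Aux.opE3_single q α t k]
  · intro k
    rw [hρz, unop_op, Stmt11Aux.opZ_eq β t]
  · intro k hk
    rw [hρw, unop_op, Stmt11Aux.opW_single t k hk]
  · intro k hk
    rw [hρw, unop_op, Stmt11Aux.opW_single_top t k hk]
  · have : Nonempty (Fin t) := ⟨⟨0, ht0⟩⟩
    exact Function.nontrivial
  · intro W hWinv
    by_cases hbot : W = ⊥
    · exact Or.inl hbot
    refine Or.inr ?_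
    obtain ⟨v, hvW, hv0⟩ := Submodule.exists_mem_ne_zero_of_ne_bot hbot
    have hE3W : ∀ u ∈ W, (fun i : Fin t => (q ^ (2*(i:ℕ)) * α) * u i) ∈ W := by
      intro u hu
      have hm := hWinv (Be3 K q) u hu
      rw [hρ3, unop_op] at hm
      have : Stmt11Aux.opE3 q α t u = fun i : Fin t => (q ^ (2*(i:ℕ)) * α) * u i := by
        funext i
        rw [Stmt11Aux.opE3_apply]
      rwa [this] at hm
    obtain ⟨k0, hk0W⟩ := Stmt11Aux.exists_single t (fun i : Fin t => q ^ (2*(i:ℕ)) * α) hlam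
      W hE3W (Finset.univ.filter (fun i => v i ≠ 0)).card v hvW hv0 le_rfl
    -- get Pi.single 0 1 ∈ W
    have hdown : ∀ n : ℕ, ∀ k : Fin t, (k:ℕ) ≤ n → Pi.single k (1:K) ∈ W →
        Pi.single (⟨0, ht0⟩ : Fin t) (1:K) ∈ W := by
      intro n
      induction n with
      | zero =>
        intro k hk hkW
        have hkv : (k:ℕ) = 0 := Nat.le_zero.1 hk
        have hke : k = ⟨0, ht0⟩ := Fin.ext (by rw [hkv])
        rwa [hke] at hkW
      | succ n ih =>
        intro k hk hkW
        by_cases h0 : (k:ℕ) = 0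
        · have hke : k = ⟨0, ht0⟩ := Fin.ext h0
          rwa [hke] at hkW
        · have hk0 : 0 < (k:ℕ) := by omega
          have hmem := hWinv (Be1 K q) _ hkW
          rw [hρ1, unop_op, Stmt11Aux.opE1_single q α t k hk0
            (Nat.lt_of_le_of_lt (Nat.sub_le _ _) k.isLt)] at hmem
          have hcc : Stmt11Aux.cc q α (k:ℕ) ≠ 0 := hcne _ hk0 k.isLt
          have hsm := W.smul_mem (Stmt11Aux.cc q α (k:ℕ))⁻¹ hmem
          rw [smul_smul, inv_mul_cancel₀ hcc, one_smul] at hsm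
          exact ih _ (by simp only [Fin.val_mk]; omega) hsm
    have h0W : Pi.single (⟨0, ht0⟩ : Fin t) (1:K) ∈ W := hdown (k0:ℕ) k0 le_rfl hk0W
    have hup : ∀ n : ℕ, ∀ hn : n < t, Pi.single (⟨n, hn⟩ : Fin t) (1:K) ∈ W := by
      intro n
      induction n with
      | zero => intro _; exact h0W
      | succ n ih =>
        intro hnt
        have hn : n < t := by omega
        have hprev := ih hn
        have hmem := hWinv (Bw K q) _ hprev
        rw [hρw, unop_op, Stmt11Aux.opW_single t ⟨n, hn⟩ (by simpa using hnt)] at hmem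
        exact hmem
    rw [eq_top_iff]
    intro f _
    have hf : f = ∑ i : Fin t, Pi.single i (f i) := (Finset.univ_sum_single f).symm
    rw [hf]
    refine Submodule.sum_mem W fun i _ => ?_
    have hsingle : Pi.single i (f i) = f i • (Pi.single i 1 : Fin t → K) := by
      funext j
      by_cases h : j = i <;> simp [Pi.single_apply, h]
    rw [hsingle]
    have : (⟨(i:ℕ), i.isLt⟩ : Fin t) = i := Fin.ext rfl
    exact W.smul_mem _ (this ▸ hup (i:ℕ) i.isLt)
  · exact Module.finrank_fin_fun K
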